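/- Type I Laguerre of the first kind orthogonality for general p ≥ 2: let α₁,…,α_p > -1 with α_i - α_j ∉ ℤ for i ≠ j, and n⃗ = (n₁,…,n_p) ∈ ℕ^p. Define L^{(i)}(x) = (-1)^{|n⃗|-1} \frac{1}{(n_i-1)! \prod_{k≠i}(α_k-α_i)_{n_k} Γ(α_i+1)}\, {}_pF_p(-n_i+1, (α_i+1-α_k-n_k)_{k≠i}; α_i+1, (α_i+1-α_k)_{k≠i}; x). Then ∑_{i=1}^p ∫₀^∞ x^j L^{(i)}(x) e^{-x} x^{α_i} dx = 0 for j ∈ {0,…,|n⃗|-2} and = 1 for j = |n⃗|-1. -/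

import Mathlib

/-- Pochhammer symbol `(x)ₙ` on `ℝ`. -/
noncomputable def poch (x : ℝ) (n : ℕ) : ℝ := ∏ s ∈ Finset.range n, (x + s)

lemma poch_zero (x : ℝ) : poch x 0 = 1 := by simp [poch]

lemma poch_add (x : ℝ) (a b : ℕ) : poch x (a + b) = poch x a * poch (x + a) b := by
  unfold poch
  rw [Finset.prod_range_add]
  congr 1
  refine Finset.prod_congr rfl fun i _ => ?_
  push_cast; ring

lemma poch_succ_left (x : ℝ) (n : ℕ) : poch x (n + 1) = x * poch (x + 1) n := by
  unfold poch
  rw [Finset.prod_range_succ', Nat.cast_zero, add_zero, mul_comm]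
  congr 1
  refine Finset.prod_congr rfl fun i _ => ?_
  push_cast; ring

lemma poch_pos (x : ℝ) (hx : 0 < x) (n : ℕ) : 0 < poch x n :=
  Finset.prod_pos fun s _ => by positivity

lemma poch_one_eq_factorial (n : ℕ) : poch 1 n = n.factorial := by
  induction n with
  | zero => simp [poch]
  | succ n ih =>
    rw [poch, Finset.prod_range_succ, ← poch, ih, Nat.factorial_succ]
    push_cast; ring

lemma prod_desc (y : ℝ) (c : ℕ) : ∏ m ∈ Finset.range c, (y - m) = poch (y - c + 1) c := by
  induction c generalizing y with
  | zero => simp [poch]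
  | succ c ih =>
    rw [Finset.prod_range_succ, ih y]
    have h : y - ((c + 1 : ℕ) : ℝ) + 1 = y - c := by push_cast; ring
    rw [h, poch_succ_left]
    ring


lemma poch_succ (x : ℝ) (n : ℕ) : poch x (n + 1) = poch x n * (x + n) := by
  rw [poch, Finset.prod_range_succ, ← poch]

lemma desc_fact (c l : ℕ) (h : l ≤ c) :
    (∏ s ∈ Finset.range l, ((c : ℝ) - s)) * ((c - l).factorial : ℝ) = (c.factorial : ℝ) := by
  induction l with
  | zero => simp
  | succ l ih =>
    have hl : l ≤ c := Nat.le_of_succ_le h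
    have hfac : (c - l).factorial = (c - l) * (c - (l + 1)).factorial := by
      have : c - l = (c - (l + 1)) + 1 := by omega
      rw [this, Nat.factorial_succ]
    rw [Finset.prod_range_succ, ← ih hl, hfac]
    have hcast : ((c : ℝ) - l) = ((c - l : ℕ) : ℝ) := by
      rw [Nat.cast_sub hl]
    rw [hcast]
    push_cast
    ring

lemma Gamma_poch (a : ℝ) (ha : 0 < a) (m : ℕ) :
    Real.Gamma (a + m) = Real.Gamma a * poch a m := by
  induction m with
  | zero => simp [poch]
  | succ m ih =>
    have h1 : a + ((m : ℝ) + 1) = (a + m) + 1 := by ring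
    push_cast
    rw [h1, Real.Gamma_add_one (by positivity), ih, poch_succ]
    ring

open MeasureTheory in
lemma moment_integrable (a : ℝ) (ha : -1 < a) (m : ℕ) :
    IntegrableOn (fun x : ℝ => x ^ m * (Real.exp (-x) * x ^ a)) (Set.Ioi 0) := by
  have hs : (0 : ℝ) < a + m + 1 := by
    have : (0:ℝ) ≤ m := Nat.cast_nonneg m
    linarith
  refine (Real.GammaIntegral_convergent hs).congr_fun (fun x hx => ?_) measurableSet_Ioi
  have hx0 : (0:ℝ) < x := hx
  beta_reduce
  rw [show a + (m:ℝ) + 1 - 1 = a + m by ring, Real.rpow_add hx0, Real.rpow_natCast]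
  ring

lemma moment_eq (a : ℝ) (ha : -1 < a) (m : ℕ) :
    ∫ x in Set.Ioi (0:ℝ), x ^ m * (Real.exp (-x) * x ^ a) = Real.Gamma (a + m + 1) := by
  have hs : (0 : ℝ) < a + m + 1 := by
    have : (0:ℝ) ≤ m := Nat.cast_nonneg m
    linarith
  rw [Real.Gamma_eq_integral hs]
  refine MeasureTheory.setIntegral_congr_fun measurableSet_Ioi (fun x hx => ?_)
  have hx0 : (0:ℝ) < x := hx
  beta_reduce
  rw [show a + (m:ℝ) + 1 - 1 = a + m by ring, Real.rpow_add hx0, Real.rpow_natCast]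
  ring

lemma sum_div_nodal {ι : Type*} [Fintype ι] [DecidableEq ι] (v : ι → ℝ) (hv : Function.Injective v)
    (f : Polynomial ℝ) (hf : f.degree < Fintype.card ι) :
    ∑ i, Polynomial.eval (v i) f / ∏ j ∈ Finset.univ.erase i, (v i - v j)
      = f.coeff (Fintype.card ι - 1) := by
  classical
  have hvs : Set.InjOn v (Finset.univ : Finset ι) := fun a _ b _ h => hv h
  have hcard : (Finset.univ : Finset ι).card = Fintype.card ι := rfl
  have hf' : f.degree < (Finset.univ : Finset ι).card := by rwa [hcard]
  conv_rhs => rw [Lagrange.eq_interpolate hvs hf']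
  rw [Lagrange.interpolate_apply, Polynomial.finset_sum_coeff]
  refine Finset.sum_congr rfl fun i _ => ?_
  rw [Polynomial.coeff_C_mul]
  have hb : (Lagrange.basis Finset.univ v i).coeff (Fintype.card ι - 1)
      = ∏ j ∈ Finset.univ.erase i, (v i - v j)⁻¹ := by
    have hnd := Lagrange.natDegree_basis hvs (Finset.mem_univ i)
    have h2 : (Lagrange.basis Finset.univ v i).coeff (Fintype.card ι - 1)
        = (Lagrange.basis Finset.univ v i).leadingCoeff := by
      rw [Polynomial.leadingCoeff, hnd, hcard]
    rw [h2, Lagrange.basis, Polynomial.leadingCoeff_prod]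
    refine Finset.prod_congr rfl fun j hj => ?_
    unfold Lagrange.basisDivisor
    rw [Polynomial.leadingCoeff_mul, Polynomial.leadingCoeff_C,
      (Polynomial.monic_X_sub_C (v j)).leadingCoeff, mul_one]
  rw [hb, Finset.prod_inv_distrib, div_eq_mul_inv]


lemma prod_neg {γ : Type*} (s : Finset γ) (f : γ → ℝ) :
    ∏ x ∈ s, (-f x) = (-1) ^ s.card * ∏ x ∈ s, f x := by
  simp_rw [neg_eq_neg_one_mul (f _), Finset.prod_mul_distrib, Finset.prod_const]

lemma poch_cross (β : ℝ) (c l : ℕ) :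
    poch (β + 1 - c) l * ∏ m ∈ Finset.range c, (β + l - m)
      = poch (β + 1) l * ∏ m ∈ Finset.range c, (β - m) := by
  have h1 : ∏ m ∈ Finset.range c, (β + l - m) = poch (β + 1 - c + l) c := by
    rw [prod_desc]
    congr 1
    ring
  have h2 : ∏ m ∈ Finset.range c, (β - m) = poch (β + 1 - c) c := by
    rw [prod_desc]
    congr 1
    ring
  rw [h1, h2, ← poch_add,
    show poch (β + 1) l = poch (β + 1 - (c:ℝ) + c) l by norm_num,
    mul_comm, ← poch_add, Nat.add_comm]

lemma poch_cross' (β : ℝ) (c l : ℕ) :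
    poch (β + 1 - c) l * ∏ m ∈ Finset.range c, (β + l - m)
      = (-1) ^ c * poch (β + 1) l * poch (-β) c := by
  rw [poch_cross]
  have : ∏ m ∈ Finset.range c, (β - m) = (-1) ^ c * poch (-β) c := by
    unfold poch
    rw [show (∏ m ∈ Finset.range c, (β - (m:ℝ))) = ∏ m ∈ Finset.range c, -(-β + m) by
      exact Finset.prod_congr rfl fun m _ => by ring, prod_neg, Finset.card_range]
  rw [this]
  ring

lemma poch_neg_nat (c l : ℕ) (h : l ≤ c) :
    poch (-(c:ℝ)) l * ((c - l).factorial : ℝ) = (-1) ^ l * (c.factorial : ℝ) := by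
  have h1 : poch (-(c:ℝ)) l = (-1) ^ l * ∏ s ∈ Finset.range l, ((c:ℝ) - s) := by
    unfold poch
    rw [show (∏ s ∈ Finset.range l, (-(c:ℝ) + s)) = ∏ s ∈ Finset.range l, -((c:ℝ) - s) by
      exact Finset.prod_congr rfl fun s _ => by ring, prod_neg, Finset.card_range]
  rw [h1, mul_assoc, desc_fact c l h]

lemma erase_range_prod (c l : ℕ) (hl : l < c) :
    ∏ m ∈ (Finset.range c).erase l, ((l:ℝ) - m)
      = (-1) ^ (c - 1 - l) * (l.factorial : ℝ) * ((c - 1 - l).factorial : ℝ) := by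
  have hset : (Finset.range c).erase l = Finset.range l ∪ Finset.Ico (l+1) c := by
    ext m
    simp only [Finset.mem_erase, Finset.mem_range, Finset.mem_union, Finset.mem_Ico]
    omega
  have hdisj : Disjoint (Finset.range l) (Finset.Ico (l+1) c) := by
    rw [Finset.disjoint_left]
    intro m hm hm'
    simp only [Finset.mem_range] at hm
    simp only [Finset.mem_Ico] at hm'
    omega
  rw [hset, Finset.prod_union hdisj]
  have h1 : ∏ m ∈ Finset.range l, ((l:ℝ) - m) = (l.factorial : ℝ) := by
    have := desc_fact l l le_rfl
    simpa using this
  have h2 : ∏ m ∈ Finset.Ico (l+1) c, ((l:ℝ) - m)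
      = (-1) ^ (c - 1 - l) * ((c - 1 - l).factorial : ℝ) := by
    rw [Finset.prod_Ico_eq_prod_range]
    have he : ∀ m ∈ Finset.range (c - (l+1)), ((l:ℝ) - (l + 1 + m : ℕ)) = -((1:ℝ) + m) := by
      intro m _
      push_cast
      ring
    rw [Finset.prod_congr rfl he, prod_neg, Finset.card_range,
      show c - (l+1) = c - 1 - l by omega]
    congr 1
    have := poch_one_eq_factorial (c - 1 - l)
    unfold poch at this
    rw [← this]
  rw [h1, h2]
  ring


lemma fin_erase_prod {c : ℕ} (l : Fin c) (f : ℕ → ℝ) :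
    ∏ m ∈ Finset.univ.erase l, f m.val = ∏ m ∈ (Finset.range c).erase l.val, f m := by
  refine Finset.prod_bij (fun (m : Fin c) _ => m.val) ?_ ?_ ?_ ?_
  · intro a ha
    rw [Finset.mem_erase] at ha
    rw [Finset.mem_erase, Finset.mem_range]
    exact ⟨fun h => ha.1 (Fin.ext h), a.isLt⟩
  · intro a ha b hb h
    exact Fin.ext h
  · intro b hb
    simp only [Finset.mem_erase, Finset.mem_range] at hb
    exact ⟨⟨b, hb.2⟩, Finset.mem_erase.mpr ⟨fun h => hb.1 (congrArg Fin.val h), Finset.mem_univ _⟩, rfl⟩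
  · intro a _; rfl

lemma nodal_prod (p : ℕ) (α : Fin p → ℝ) (n : Fin p → ℕ) (i : Fin p) (l : Fin (n i)) :
    ∏ t ∈ Finset.univ.erase (⟨i, l⟩ : Σ k : Fin p, Fin (n k)),
        ((α i + l.val) - (α t.1 + t.2.val))
      = (∏ m ∈ (Finset.range (n i)).erase l.val, ((l.val : ℝ) - m)) *
        ∏ k ∈ Finset.univ.erase i, ∏ m ∈ Finset.range (n k), (α i + l.val - α k - m) := by
  classical
  have hset : (Finset.univ : Finset (Σ k : Fin p, Fin (n k))).erase ⟨i, l⟩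
      = Finset.univ.sigma
          (fun k => Finset.univ.filter (fun m => (⟨k, m⟩ : Σ k : Fin p, Fin (n k)) ≠ ⟨i, l⟩)) := by
    ext t
    rcases t with ⟨k, m⟩
    simp [Finset.mem_sigma, Finset.mem_erase, Finset.mem_filter]
  rw [hset, Finset.prod_sigma, ← Finset.mul_prod_erase Finset.univ _ (Finset.mem_univ i)]
  congr 1
  · have hfil : (Finset.univ.filter
        (fun m : Fin (n i) => (⟨i, m⟩ : Σ k : Fin p, Fin (n k)) ≠ ⟨i, l⟩))
        = Finset.univ.erase l := by
      ext m
      simp [Sigma.mk.inj_iff]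
    rw [hfil]
    rw [show (fun m : Fin (n i) => α i + (l.val : ℝ) - (α i + m.val))
        = fun m : Fin (n i) => ((l.val : ℝ) - m.val) from funext fun m => by ring]
    exact fin_erase_prod l (fun m => (l.val : ℝ) - m)
  · refine Finset.prod_congr rfl fun k hk => ?_
    have hki : k ≠ i := (Finset.mem_erase.mp hk).1
    rw [Finset.filter_true_of_mem (fun m _ => by
      intro h
      exact hki (congrArg Sigma.fst h))]
    rw [← Fin.prod_univ_eq_prod_range (fun m => α i + (l.val : ℝ) - α k - m) (n k)]
    refine Finset.prod_congr rfl fun m _ => by ring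


lemma poch_ne_zero_of (x : ℝ) (m : ℕ) (h : ∀ s : ℕ, x + s ≠ 0) : poch x m ≠ 0 :=
  Finset.prod_ne_zero_iff.mpr fun s _ => h s

lemma node_eq (p : ℕ) (α : Fin p → ℝ) (hα : ∀ k, -1 < α k)
    (hZ : ∀ k k', k ≠ k' → ∀ z : ℤ, α k - α k' ≠ (z : ℝ))
    (n : Fin p → ℕ) (hn : ∀ k, 1 ≤ n k) (j : ℕ) (i : Fin p) (l : Fin (n i)) :
    (-1:ℝ) ^ ((∑ k, n k) - 1) *
      (1 / (((n i - 1).factorial : ℝ) *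
        (∏ k ∈ Finset.univ.erase i, poch (α k - α i) (n k)) * Real.Gamma (α i + 1))) *
      (poch (-(n i : ℝ) + 1) l.val *
          (∏ k ∈ Finset.univ.erase i, poch (α i + 1 - α k - n k) l.val) /
          (poch (α i + 1) l.val *
            (∏ k ∈ Finset.univ.erase i, poch (α i + 1 - α k) l.val) * (l.val.factorial : ℝ))) *
      Real.Gamma (α i + ((j + l.val : ℕ) : ℝ) + 1)
    = poch (α i + l.val + 1) j /
        ∏ t ∈ Finset.univ.erase (⟨i, l⟩ : Σ k : Fin p, Fin (n k)),
          ((α i + l.val) - (α t.1 + t.2.val)) := by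
  classical
  have hl : l.val < n i := l.isLt
  have hlc : l.val ≤ n i - 1 := by omega
  have hni : 1 ≤ n i := hn i
  have hniN : n i ≤ ∑ k, n k := Finset.single_le_sum (fun k _ => Nat.zero_le _) (Finset.mem_univ i)
  have hαi : (0:ℝ) < α i + 1 := by linarith [hα i]
  -- nonvanishing
  have hG : Real.Gamma (α i + 1) ≠ 0 := (Real.Gamma_pos_of_pos hαi).ne'
  have hP1 : poch (α i + 1) l.val ≠ 0 := (poch_pos _ hαi _).ne'
  have hR : (∏ k ∈ Finset.univ.erase i, poch (α i + 1 - α k) l.val) ≠ 0 := by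
    refine Finset.prod_ne_zero_iff.mpr fun k hk => poch_ne_zero_of _ _ fun s hs => ?_
    have hki : k ≠ i := (Finset.mem_erase.mp hk).1
    refine hZ i k hki.symm (-(1 + s)) ?_
    push_cast
    linarith [hs]
  have hK : (∏ k ∈ Finset.univ.erase i, poch (α k - α i) (n k)) ≠ 0 := by
    refine Finset.prod_ne_zero_iff.mpr fun k hk => poch_ne_zero_of _ _ fun s hs => ?_
    have hki : k ≠ i := (Finset.mem_erase.mp hk).1
    refine hZ k i hki (-s) ?_
    push_cast
    linarith [hs]
  have hF : (∏ k ∈ Finset.univ.erase i, ∏ m ∈ Finset.range (n k),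
      (α i + (l.val:ℝ) - α k - m)) ≠ 0 := by
    refine Finset.prod_ne_zero_iff.mpr fun k hk => Finset.prod_ne_zero_iff.mpr fun m _ => fun hm => ?_
    have hki : k ≠ i := (Finset.mem_erase.mp hk).1
    refine hZ i k hki.symm ((m : ℤ) - l.val) ?_
    push_cast
    linarith [hm]
  -- key identities
  have hQ : (∏ k ∈ Finset.univ.erase i, poch (α i + 1 - α k - n k) l.val)
      = (-1:ℝ) ^ ((∑ k, n k) - n i) *
        (∏ k ∈ Finset.univ.erase i, poch (α i + 1 - α k) l.val) *
        (∏ k ∈ Finset.univ.erase i, poch (α k - α i) (n k)) /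
        (∏ k ∈ Finset.univ.erase i, ∏ m ∈ Finset.range (n k), (α i + (l.val:ℝ) - α k - m)) := by
    rw [eq_div_iff hF, ← Finset.prod_mul_distrib]
    have hsum : ∑ k ∈ Finset.univ.erase i, n k = (∑ k, n k) - n i := by
      have := Finset.sum_erase_add Finset.univ n (Finset.mem_univ i)
      omega
    rw [show ((-1:ℝ) ^ ((∑ k, n k) - n i)) = ∏ k ∈ Finset.univ.erase i, (-1:ℝ) ^ (n k) by
      rw [Finset.prod_pow_eq_pow_sum, hsum]]
    rw [mul_assoc, ← Finset.prod_mul_distrib, ← Finset.prod_mul_distrib]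
    refine Finset.prod_congr rfl fun k hk => ?_
    have h := poch_cross' (α i - α k) (n k) l.val
    ring_nf at h ⊢
    convert h using 2 <;> ring_nf
  have hpn : poch (-(n i : ℝ) + 1) l.val
      = (-1:ℝ) ^ l.val * ((n i - 1).factorial : ℝ) / (((n i - 1 - l.val).factorial : ℝ)) := by
    have harg : -(n i : ℝ) + 1 = -(((n i - 1 : ℕ) : ℝ)) := by
      rw [Nat.cast_sub hni]
      push_cast
      ring
    rw [harg, eq_div_iff (by exact_mod_cast (Nat.factorial_ne_zero _))]
    exact poch_neg_nat (n i - 1) l.val hlc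
  have hΓ : Real.Gamma (α i + ((j + l.val : ℕ) : ℝ) + 1)
      = Real.Gamma (α i + 1) * (poch (α i + 1) l.val * poch (α i + 1 + l.val) j) := by
    rw [show α i + ((j + l.val : ℕ) : ℝ) + 1 = (α i + 1) + ((l.val + j : ℕ) : ℝ) by push_cast; ring,
      Gamma_poch _ hαi, poch_add]
  have hsgn : (-1:ℝ) ^ ((∑ k, n k) - 1) * ((-1:ℝ) ^ l.val *
      ((-1:ℝ) ^ ((∑ k, n k) - n i) * (-1:ℝ) ^ (n i - 1 - l.val))) = 1 := by
    rw [← pow_add, ← pow_add, ← pow_add,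
      show (∑ k, n k) - 1 + (l.val + ((∑ k, n k) - n i + (n i - 1 - l.val)))
        = 2 * ((∑ k, n k) - 1) by omega,
      pow_mul]
    norm_num
  rw [nodal_prod, erase_range_prod (n i) l.val hl, hQ, hpn, hΓ,
    show α i + (l.val:ℝ) + 1 = α i + 1 + l.val by ring]
  field_simp
  linear_combination (poch (α i + 1 + (l.val:ℝ)) j) * hsgn



/-- The `i`-th type I Laguerre polynomial of the first kind for `p` weights. -/
noncomputable def Lag (p : ℕ) (α : Fin p → ℝ) (n : Fin p → ℕ) (i : Fin p) (x : ℝ) : ℝ :=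
  (-1) ^ ((∑ k, n k) - 1) *
    (1 / (((n i - 1).factorial : ℝ) *
      (∏ k ∈ Finset.univ.erase i, poch (α k - α i) (n k)) * Real.Gamma (α i + 1))) *
    ∑ l ∈ Finset.range (n i),
      poch (-(n i : ℝ) + 1) l *
          (∏ k ∈ Finset.univ.erase i, poch (α i + 1 - α k - n k) l) /
          (poch (α i + 1) l *
            (∏ k ∈ Finset.univ.erase i, poch (α i + 1 - α k) l) * (l.factorial : ℝ)) *
        x ^ l

open MeasureTheory Polynomial in
lemma main_sum (p : ℕ) (α : Fin p → ℝ) (hα : ∀ k, -1 < α k)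
    (hZ : ∀ k k', k ≠ k' → ∀ z : ℤ, α k - α k' ≠ (z : ℝ))
    (n : Fin p → ℕ) (hn : ∀ k, 1 ≤ n k) (j : ℕ) (hj : j + 1 ≤ ∑ k, n k) :
    ∑ i, ∫ x in Set.Ioi (0:ℝ), x ^ j * Lag p α n i x * (Real.exp (-x) * x ^ α i)
      = (∏ u ∈ Finset.range j, (X + C ((u:ℝ) + 1))).coeff ((∑ k, n k) - 1) := by
  classical
  set f : ℝ[X] := ∏ u ∈ Finset.range j, (X + C ((u:ℝ) + 1)) with hf
  -- Step A: compute each integral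
  have hint : ∀ i, (∫ x in Set.Ioi (0:ℝ), x ^ j * Lag p α n i x * (Real.exp (-x) * x ^ α i))
      = ∑ l ∈ Finset.range (n i),
          (-1:ℝ) ^ ((∑ k, n k) - 1) *
            (1 / (((n i - 1).factorial : ℝ) *
              (∏ k ∈ Finset.univ.erase i, poch (α k - α i) (n k)) * Real.Gamma (α i + 1))) *
            (poch (-(n i : ℝ) + 1) l *
              (∏ k ∈ Finset.univ.erase i, poch (α i + 1 - α k - n k) l) /
              (poch (α i + 1) l *
                (∏ k ∈ Finset.univ.erase i, poch (α i + 1 - α k) l) * (l.factorial : ℝ))) *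
            Real.Gamma (α i + ((j + l : ℕ) : ℝ) + 1) := by
    intro i
    have hfun : ∀ x : ℝ, x ^ j * Lag p α n i x * (Real.exp (-x) * x ^ α i)
        = ∑ l ∈ Finset.range (n i),
            ((-1:ℝ) ^ ((∑ k, n k) - 1) *
              (1 / (((n i - 1).factorial : ℝ) *
                (∏ k ∈ Finset.univ.erase i, poch (α k - α i) (n k)) * Real.Gamma (α i + 1))) *
              (poch (-(n i : ℝ) + 1) l *
                (∏ k ∈ Finset.univ.erase i, poch (α i + 1 - α k - n k) l) /
                (poch (α i + 1) l *
                  (∏ k ∈ Finset.univ.erase i, poch (α i + 1 - α k) l) * (l.factorial : ℝ)))) *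
              (x ^ (j + l) * (Real.exp (-x) * x ^ α i)) := by
      intro x
      simp only [Lag, Finset.mul_sum, Finset.sum_mul]
      refine Finset.sum_congr rfl fun l _ => ?_
      rw [pow_add]
      ring
    simp only [hfun]
    rw [integral_finset_sum _ (fun l _ => ((moment_integrable (α i) (hα i) (j + l)).const_mul _))]
    refine Finset.sum_congr rfl fun l _ => ?_
    rw [MeasureTheory.integral_const_mul, moment_eq (α i) (hα i) (j + l)]
  simp only [hint]
  -- Step B: rewrite as sum over sigma type of node values
  have hstep : ∀ i, ∀ l ∈ Finset.range (n i), True := fun _ _ _ => trivial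
  have hrange : ∀ i : Fin p, (∑ l ∈ Finset.range (n i),
      (-1:ℝ) ^ ((∑ k, n k) - 1) *
        (1 / (((n i - 1).factorial : ℝ) *
          (∏ k ∈ Finset.univ.erase i, poch (α k - α i) (n k)) * Real.Gamma (α i + 1))) *
        (poch (-(n i : ℝ) + 1) l *
          (∏ k ∈ Finset.univ.erase i, poch (α i + 1 - α k - n k) l) /
          (poch (α i + 1) l *
            (∏ k ∈ Finset.univ.erase i, poch (α i + 1 - α k) l) * (l.factorial : ℝ))) *
        Real.Gamma (α i + ((j + l : ℕ) : ℝ) + 1))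
      = ∑ l : Fin (n i),
          poch (α i + l.val + 1) j /
            ∏ t ∈ Finset.univ.erase (⟨i, l⟩ : Σ k : Fin p, Fin (n k)),
              ((α i + l.val) - (α t.1 + t.2.val)) := by
    intro i
    rw [← Fin.sum_univ_eq_sum_range]
    exact Finset.sum_congr rfl fun l _ => node_eq p α hα hZ n hn j i l
  simp only [hrange]
  -- sigma sum
  set v : (Σ k : Fin p, Fin (n k)) → ℝ := fun s => α s.1 + s.2.val with hv
  have hvinj : Function.Injective v := by
    rintro ⟨a, b⟩ ⟨c, d⟩ h
    simp only [hv] at h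
    by_cases hac : a = c
    · subst hac
      have : (b.val : ℝ) = d.val := by linarith
      have : b = d := Fin.ext (by exact_mod_cast this)
      rw [this]
    · exact absurd (by push_cast; linarith : α a - α c = (((d.val : ℤ) - b.val : ℤ) : ℝ))
        (hZ a c hac _)
  have hcard : Fintype.card (Σ k : Fin p, Fin (n k)) = ∑ k, n k := by
    simp [Fintype.card_sigma]
  have hdeg : f.degree < Fintype.card (Σ k : Fin p, Fin (n k)) := by
    have hmon : f.Monic := monic_prod_of_monic _ _ fun u _ => monic_X_add_C _
    have hnd : f.natDegree = j := by
      rw [hf, natDegree_prod_of_monic _ _ fun u _ => monic_X_add_C _,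
        Finset.sum_congr rfl (fun (u : ℕ) _ => natDegree_X_add_C ((u:ℝ)+1)), Finset.sum_const,
        smul_eq_mul, mul_one, Finset.card_range]
    calc f.degree ≤ f.natDegree := degree_le_natDegree
    _ < _ := by
        rw [hnd, hcard]
        exact_mod_cast hj
  have := sum_div_nodal v hvinj f hdeg
  rw [hcard] at this
  rw [← this, ← Finset.univ_sigma_univ, Finset.sum_sigma]
  refine Finset.sum_congr rfl fun i _ => Finset.sum_congr rfl fun l _ => ?_
  congr 1
  rw [hf, eval_prod]
  unfold poch
  refine Finset.prod_congr rfl fun u _ => ?_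
  simp only [eval_add, eval_X, eval_C, hv]
  ring


/-- Type I orthogonality for the multiple Laguerre polynomials of the first kind,
for a general number `p ≥ 2` of weights. -/
theorem laguerreFirstKind_typeI_orthogonality (p : ℕ) (hp : 2 ≤ p) (α : Fin p → ℝ)
    (hα : ∀ k, -1 < α k)
    (hZ : ∀ k k', k ≠ k' → ∀ z : ℤ, α k - α k' ≠ (z : ℝ))
    (n : Fin p → ℕ) (hn : ∀ k, 1 ≤ n k) :
    (∀ j : ℕ, j + 2 ≤ ∑ k, n k →
      ∑ i, ∫ x in Set.Ioi (0:ℝ),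
        x ^ j * Lag p α n i x * (Real.exp (-x) * x ^ α i) = 0)
    ∧ ∑ i, ∫ x in Set.Ioi (0:ℝ),
        x ^ ((∑ k, n k) - 1) * Lag p α n i x * (Real.exp (-x) * x ^ α i) = 1 := by
  classical
  have hpN : p ≤ ∑ k, n k := by
    calc p = ∑ _k : Fin p, 1 := by simp
    _ ≤ ∑ k, n k := Finset.sum_le_sum fun k _ => hn k
  have hN2 : 2 ≤ ∑ k, n k := le_trans hp hpN
  have hmon : ∀ j : ℕ, (∏ u ∈ Finset.range j, (Polynomial.X + Polynomial.C ((u:ℝ) + 1))).Monic :=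
    fun j => Polynomial.monic_prod_of_monic _ _ fun u _ => Polynomial.monic_X_add_C _
  have hnd : ∀ j : ℕ, (∏ u ∈ Finset.range j, (Polynomial.X + Polynomial.C ((u:ℝ) + 1))).natDegree = j := by
    intro j
    rw [Polynomial.natDegree_prod_of_monic _ _ fun u _ => Polynomial.monic_X_add_C _,
      Finset.sum_congr rfl (fun (u : ℕ) _ => Polynomial.natDegree_X_add_C ((u:ℝ)+1)),
      Finset.sum_const, smul_eq_mul, mul_one, Finset.card_range]
  constructor
  · intro j hj
    rw [main_sum p α hα hZ n hn j (by omega)]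
    apply Polynomial.coeff_eq_zero_of_natDegree_lt
    rw [hnd j]
    omega
  · rw [main_sum p α hα hZ n hn ((∑ k, n k) - 1) (by omega)]
    have := (hmon ((∑ k, n k) - 1)).coeff_natDegree
    rwa [hnd ((∑ k, n k) - 1)] at this
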